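/- Let p : ℝ → ℝ be 2π-periodic and C³ such that p'(φ)² + p''(φ)² > 0 for all φ. Then the winding number m of the evolute e(φ) = p'(φ)u'(φ) - p''(φ)u(φ) around the origin satisfies m = 1 - n/2, where n is the number of zeros of p' in [0,2π). In particular m ≤ 0 and n = 2 - 2m. -/

import Mathlib

/-!
Identify ℝ² with ℂ and put z = p' + i p''. Then the evolute is e(φ) = i z(φ) e^{iφ}, so
Im(e'/e) = 1 + Im(z'/z) and the winding number of e is 1 + k, where k is the winding number of
the closed curve z around 0 (which z avoids by the regularity hypothesis). Let θ be a continuous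
argument of z. The zeros of p' are the times where cos θ = 0, and there θ' = Im(z'/z) = -1, so
θ crosses every level in π/2 + πℤ downwards and hence only once. The zeros of p' in [0, 2π)
therefore correspond to the points of π/2 + πℤ in (θ(2π), θ(0)], an interval of length -2πk
containing -2k of them. Since p' vanishes at a maximum of p, this number is positive.
-/

open Real Set Complex

noncomputable def argLift (γ : ℝ → ℂ) (a t : ℝ) : ℝ :=
  arg (γ a) + ∫ s in a..t, (deriv γ s / γ s).im

section ArgLift

variable {γ : ℝ → ℂ} (hγ : ContDiff ℝ 1 γ) (hne : ∀ t, γ t ≠ 0)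
include hγ hne

theorem continuous_deriv_div : Continuous fun s => deriv γ s / γ s :=
  (hγ.continuous_deriv le_rfl).div hγ.continuous hne

theorem integral_im_deriv_div (a t : ℝ) :
    ∫ s in a..t, (deriv γ s / γ s).im = (∫ s in a..t, deriv γ s / γ s).im :=
  intervalIntegral.intervalIntegral_im ((continuous_deriv_div hγ hne).intervalIntegrable a t)

theorem eq_mul_exp_integral_deriv_div (a t : ℝ) :
    γ t = γ a * exp (∫ s in a..t, deriv γ s / γ s) := by
  set L : ℝ → ℂ := fun t => ∫ s in a..t, deriv γ s / γ s
  have hL : ∀ s, HasDerivAt L (deriv γ s / γ s) s := fun s =>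
    ((continuous_deriv_div hγ hne).integral_hasStrictDerivAt a s).hasDerivAt
  have hF : ∀ s, HasDerivAt (fun s => γ s * exp (-L s)) 0 s := fun s => by
    refine ((hγ.differentiable one_ne_zero s).hasDerivAt.mul (hL s).neg.cexp).congr_deriv ?_
    field_simp [hne s]
    ring
  have hconst : γ t * exp (-L t) = γ a * exp (-L a) :=
    is_const_of_deriv_eq_zero (fun s => (hF s).differentiableAt) (fun s => (hF s).deriv) t a
  simp only [L, intervalIntegral.integral_same, neg_zero, Complex.exp_zero, mul_one] at hconst
  rw [← hconst, mul_assoc, ← Complex.exp_add, neg_add_cancel, Complex.exp_zero, mul_one]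

theorem continuous_im_deriv_div : Continuous fun s => (deriv γ s / γ s).im :=
  continuous_im.comp (continuous_deriv_div hγ hne)

theorem hasDerivAt_argLift (a t : ℝ) :
    HasDerivAt (argLift γ a) (deriv γ t / γ t).im t :=
  ((continuous_im_deriv_div hγ hne).integral_hasStrictDerivAt a t).hasDerivAt.const_add _

theorem norm_mul_exp_argLift (a t : ℝ) : (‖γ t‖ : ℂ) * exp (argLift γ a t * I) = γ t := by
  have key : γ t = (‖γ a‖ * Real.exp (∫ s in a..t, deriv γ s / γ s).re : ℝ) *
      exp (argLift γ a t * I) := by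
    rw [argLift, integral_im_deriv_div hγ hne, eq_mul_exp_integral_deriv_div hγ hne a t]
    generalize ∫ s in a..t, deriv γ s / γ s = L
    conv_lhs => rw [← norm_mul_exp_arg_mul_I (γ a), ← re_add_im L]
    push_cast [ofReal_exp]
    rw [mul_assoc, ← Complex.exp_add, mul_assoc, ← Complex.exp_add]
    ring_nf
  have hnorm : ‖γ t‖ = ‖γ a‖ * Real.exp (∫ s in a..t, deriv γ s / γ s).re := by
    rw [key, norm_mul, norm_exp_ofReal_mul_I, mul_one, norm_real, norm_of_nonneg (by positivity)]
  rw [hnorm, ← key]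

theorem re_eq_zero_iff_cos_argLift (a t : ℝ) : (γ t).re = 0 ↔ Real.cos (argLift γ a t) = 0 := by
  rw [← norm_mul_exp_argLift hγ hne a t, re_ofReal_mul, exp_ofReal_mul_I_re, mul_eq_zero,
    or_iff_right (norm_ne_zero_iff.mpr (hne t))]

theorem exists_integral_im_deriv_div_eq_two_pi_mul_int {a b : ℝ} (hab : γ b = γ a) :
    ∃ k : ℤ, ∫ s in a..b, (deriv γ s / γ s).im = 2 * π * k := by
  have hexp : exp (∫ s in a..b, deriv γ s / γ s) = 1 := by
    have := eq_mul_exp_integral_deriv_div hγ hne a b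
    rw [hab] at this
    exact (mul_eq_left₀ (hne a)).mp this.symm
  obtain ⟨k, hk⟩ := Complex.exp_eq_one_iff.mp hexp
  exact ⟨k, by rw [integral_im_deriv_div hγ hne, hk]; simp [mul_comm]⟩

end ArgLift

section LevelCrossing

variable {θ θ' : ℝ → ℝ} (hθ : ∀ t, HasDerivAt θ (θ' t) t)
include hθ

theorem le_of_deriv_neg_at_level {c a b : ℝ} (hc : ∀ t, θ t = c → θ' t < 0) (ha : θ a ≤ c)
    (hab : a ≤ b) : θ b ≤ c :=
  image_le_of_deriv_right_lt_deriv_boundary (B := fun _ => c) (B' := 0)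
    (fun t _ => (hθ t).continuousAt.continuousWithinAt) (fun t _ => (hθ t).hasDerivWithinAt) ha
    (fun _ => hasDerivAt_const _ _) (fun t _ ht => hc t ht) ⟨hab, le_rfl⟩

theorem lt_of_deriv_neg_at_level {c a b : ℝ} (hc : ∀ t, θ t = c → θ' t < 0) (ha : θ a ≤ c)
    (hab : a < b) : θ b < c := by
  refine (le_of_deriv_neg_at_level hθ hc ha hab.le).lt_of_ne fun hb => (hc b hb).ne ?_
  have hmax : IsLocalMax θ b := by
    filter_upwards [Ioi_mem_nhds hab] with t ht
    exact hb ▸ le_of_deriv_neg_at_level hθ hc ha ht.le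
  exact hmax.hasDerivAt_eq_zero (hθ b)

theorem mem_Ioc_of_crossing {P : ℝ → Prop} (hP : ∀ t, P (θ t) → θ' t < 0) {a b t : ℝ}
    (ht : t ∈ Ico a b) (hPt : P (θ t)) : θ t ∈ Ioc (θ b) (θ a) := by
  have hlevel : ∀ s, θ s = θ t → θ' s < 0 := fun s hs => hP s (hs ▸ hPt)
  refine ⟨lt_of_deriv_neg_at_level hθ hlevel le_rfl ht.2, ?_⟩
  by_contra! hlt
  rcases ht.1.eq_or_lt with rfl | hat
  · exact hlt.false
  · exact (lt_of_deriv_neg_at_level hθ hlevel hlt.le hat).false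

theorem ncard_crossings_eq_ncard_levels {P : ℝ → Prop} (hP : ∀ t, P (θ t) → θ' t < 0)
    {a b : ℝ} (hab : a ≤ b) :
    {t ∈ Ico a b | P (θ t)}.ncard = {c ∈ Ioc (θ b) (θ a) | P c}.ncard := by
  have hinj : InjOn θ {t ∈ Ico a b | P (θ t)} := by
    intro t₁ ⟨_, h₁⟩ t₂ _ h
    have hlevel : ∀ s, θ s = θ t₁ → θ' s < 0 := fun s hs => hP s (hs ▸ h₁)
    by_contra hne
    rcases lt_or_gt_of_ne hne with hlt | hlt
    · exact (lt_of_deriv_neg_at_level hθ hlevel le_rfl hlt).ne h.symm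
    · exact (lt_of_deriv_neg_at_level hθ hlevel h.ge hlt).ne rfl
  rw [← hinj.ncard_image]
  congr 1
  ext c
  constructor
  · rintro ⟨t, ⟨ht, hPt⟩, rfl⟩
    exact ⟨mem_Ioc_of_crossing hθ hP ht hPt, hPt⟩
  · rintro ⟨⟨hbc, hca⟩, hc⟩
    obtain ⟨t, ⟨hat, htb⟩, rfl⟩ := intermediate_value_Icc' hab
      (fun t _ => (hθ t).continuousAt.continuousWithinAt) ⟨hbc.le, hca⟩
    exact ⟨t, ⟨⟨hat, htb.lt_of_ne (by rintro rfl; exact hbc.false)⟩, hc⟩, rfl⟩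

end LevelCrossing

theorem ncard_Ioc_cos_eq_zero (a : ℝ) (M : ℕ) :
    {c ∈ Ioc a (a + M * π) | Real.cos c = 0}.ncard = M := by
  set x := a / π - 1 / 2
  have hx : a = (2 * x + 1) * π / 2 := by simp only [x]; field_simp; ring
  have hxM : a + M * π = (2 * (x + M) + 1) * π / 2 := by rw [hx]; ring
  have hlt : ∀ y z : ℝ, (2 * y + 1) * π / 2 < (2 * z + 1) * π / 2 ↔ y < z := fun y z => by
    constructor <;> intro h <;> nlinarith [pi_pos]
  have hle : ∀ y z : ℝ, (2 * y + 1) * π / 2 ≤ (2 * z + 1) * π / 2 ↔ y ≤ z := fun y z => by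
    constructor <;> intro h <;> nlinarith [pi_pos]
  have hinj : Function.Injective fun j : ℤ => (2 * j + 1) * π / 2 := fun i j h =>
    by exact_mod_cast le_antisymm ((hle _ _).mp h.le) ((hle _ _).mp h.ge)
  have hmem : ∀ j : ℤ, (2 * j + 1) * π / 2 ∈ Ioc a (a + M * π) ↔ j ∈ Ioc ⌊x⌋ (⌊x⌋ + M) := by
    intro j
    rw [mem_Ioc, mem_Ioc, hxM, hx, hlt, hle, Int.floor_lt, ← Int.floor_add_natCast, Int.le_floor]
  have hset : {c ∈ Ioc a (a + M * π) | Real.cos c = 0} =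
      (fun j : ℤ => (2 * j + 1) * π / 2) '' Ioc ⌊x⌋ (⌊x⌋ + M) := by
    ext c
    constructor
    · rintro ⟨hc, hcos⟩
      obtain ⟨j, rfl⟩ := Real.cos_eq_zero_iff.mp hcos
      exact ⟨j, (hmem j).mp hc, rfl⟩
    · rintro ⟨j, hj, rfl⟩
      exact ⟨(hmem j).mpr hj, Real.cos_eq_zero_iff.mpr ⟨j, rfl⟩⟩
  rw [hset, ncard_image_of_injective _ hinj, ← Finset.coe_Ioc, ncard_coe_finset, Int.card_Ioc]
  simp

theorem Function.Periodic.exists_mem_Ico₀_deriv_eq_zero {p : ℝ → ℝ} {T : ℝ}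
    (hper : Function.Periodic p T) (hT : 0 < T) (hp : Differentiable ℝ p) :
    ∃ t ∈ Ico 0 T, deriv p t = 0 := by
  obtain ⟨_, ⟨t, rfl⟩, hmax⟩ :=
    (hper.compact_of_continuous hT.ne' hp.continuous).exists_isGreatest (range_nonempty p)
  obtain ⟨s, hs, hts⟩ := hper.exists_mem_Ico₀ hT t
  refine ⟨s, hs, IsLocalMax.deriv_eq_zero (Filter.Eventually.of_forall fun u => ?_)⟩
  exact hts ▸ hmax ⟨u, rfl⟩

theorem Function.Periodic.deriv {p : ℝ → ℝ} {T : ℝ} (hper : Function.Periodic p T) :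
    Function.Periodic (deriv p) T := fun x => by
  rw [← deriv_comp_add_const, hper.funext]

theorem winding_integrand_eq_im_deriv_div {E : ℝ → ℂ} {e : ℝ → ℝ × ℝ}
    (he : ∀ s, e s = ((E s).re, (E s).im)) {t : ℝ} (hE : DifferentiableAt ℝ E t) :
    ((e t).1 * (deriv e t).2 - (e t).2 * (deriv e t).1) / ((e t).1 ^ 2 + (e t).2 ^ 2) =
      (deriv E t / E t).im := by
  have hde : deriv e t = ((deriv E t).re, (deriv E t).im) := by
    rw [funext he]
    exact ((reCLM.hasFDerivAt.comp_hasDerivAt t hE.hasDerivAt).prodMk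
      (imCLM.hasFDerivAt.comp_hasDerivAt t hE.hasDerivAt)).deriv
  rw [hde, he, div_im, normSq_apply]
  ring

theorem im_deriv_div_mul_exp {z : ℝ → ℂ} {φ : ℝ} (hz : DifferentiableAt ℝ z φ) (hz0 : z φ ≠ 0) :
    (deriv (fun s : ℝ => I * z s * exp (s * I)) φ / (I * z φ * exp (φ * I))).im =
      1 + (deriv z φ / z φ).im := by
  have hexp : HasDerivAt (fun s : ℝ => exp (s * I)) (exp (φ * I) * I) φ := by
    simpa using ((hasDerivAt_id φ).ofReal_comp.mul_const I).cexp
  have hE : HasDerivAt (fun s : ℝ => I * z s * exp (s * I))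
      (I * deriv z φ * exp (φ * I) + I * z φ * (exp (φ * I) * I)) φ :=
    (hz.hasDerivAt.const_mul I).mul hexp
  rw [hE.deriv]
  have : (I * deriv z φ * exp (φ * I) + I * z φ * (exp (φ * I) * I)) / (I * z φ * exp (φ * I)) =
      deriv z φ / z φ + I := by
    field_simp [hz0, Complex.exp_ne_zero]
  rw [this, add_im, I_im, add_comm]

noncomputable def derivCurve (p : ℝ → ℝ) (t : ℝ) : ℂ :=
  deriv p t + deriv (deriv p) t * I

section DerivCurve

variable {p : ℝ → ℝ}

theorem contDiff_derivCurve (hp : ContDiff ℝ 3 p) : ContDiff ℝ 1 (derivCurve p) := by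
  have h1 : ContDiff ℝ 1 (deriv p) := (hp.deriv' : ContDiff ℝ 2 (deriv p)).of_le (by norm_num)
  have h2 : ContDiff ℝ 1 (deriv (deriv p)) := hp.deriv'.deriv'
  exact (ofRealCLM.contDiff.comp h1).add ((ofRealCLM.contDiff.comp h2).mul contDiff_const)

theorem hasDerivAt_derivCurve (hp : ContDiff ℝ 3 p) (t : ℝ) :
    HasDerivAt (derivCurve p) (deriv (deriv p) t + deriv (deriv (deriv p)) t * I) t := by
  have h1 : ContDiff ℝ 2 (deriv p) := hp.deriv'
  have h2 : ContDiff ℝ 1 (deriv (deriv p)) := h1.deriv'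
  exact (h1.differentiable two_ne_zero t).hasDerivAt.ofReal_comp.add
    ((h2.differentiable one_ne_zero t).hasDerivAt.ofReal_comp.mul_const I)

@[simp]
theorem re_derivCurve (t : ℝ) : (derivCurve p t).re = deriv p t := by
  simp [derivCurve]

@[simp]
theorem im_derivCurve (t : ℝ) : (derivCurve p t).im = deriv (deriv p) t := by
  simp [derivCurve]

theorem derivCurve_ne_zero (hreg : ∀ φ, 0 < (deriv p φ) ^ 2 + (deriv (deriv p) φ) ^ 2) (t : ℝ) :
    derivCurve p t ≠ 0 := fun h => by
  have hre : deriv p t = 0 := by simpa using congrArg re h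
  have him : deriv (deriv p) t = 0 := by simpa using congrArg im h
  simpa [hre, him] using hreg t

theorem Function.Periodic.derivCurve {T : ℝ} (hper : Function.Periodic p T) :
    Function.Periodic (derivCurve p) T := fun t => by
  simp only [_root_.derivCurve, hper.deriv t, hper.deriv.deriv t]

theorem im_deriv_div_derivCurve_of_deriv_eq_zero (hp : ContDiff ℝ 3 p)
    (hreg : ∀ φ, 0 < (deriv p φ) ^ 2 + (deriv (deriv p) φ) ^ 2) {t : ℝ} (ht : deriv p t = 0) :
    (deriv (derivCurve p) t / derivCurve p t).im = -1 := by
  have h2 : deriv (deriv p) t ≠ 0 := fun h => by simpa [ht, h] using hreg t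
  rw [(hasDerivAt_derivCurve hp t).deriv, derivCurve, ht, div_im, normSq_apply]
  simp [h2]

theorem evolute_winding_integrand (hp : ContDiff ℝ 3 p)
    (hreg : ∀ φ, 0 < (deriv p φ) ^ 2 + (deriv (deriv p) φ) ^ 2) {e : ℝ → ℝ × ℝ}
    (he : ∀ φ, e φ = deriv p φ • (-Real.sin φ, Real.cos φ)
        - deriv (deriv p) φ • (Real.cos φ, Real.sin φ)) (φ : ℝ) :
    ((e φ).1 * (deriv e φ).2 - (e φ).2 * (deriv e φ).1) / ((e φ).1 ^ 2 + (e φ).2 ^ 2) =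
      1 + (deriv (derivCurve p) φ / derivCurve p φ).im := by
  set E : ℝ → ℂ := fun s => I * derivCurve p s * exp (s * I)
  have hE : ∀ s, e s = ((E s).re, (E s).im) := by
    intro s
    rw [he]
    simp only [E, Prod.smul_mk, smul_eq_mul, Prod.mk_sub_mk, mul_re, mul_im, re_derivCurve,
      im_derivCurve, I_re, I_im, exp_ofReal_mul_I_re, exp_ofReal_mul_I_im, Prod.mk.injEq]
    constructor <;> ring
  have hz := (contDiff_derivCurve hp).differentiable one_ne_zero
  have hd : Differentiable ℝ E := by fun_prop
  exact (winding_integrand_eq_im_deriv_div hE (hd φ)).trans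
    (im_deriv_div_mul_exp (hz φ) (derivCurve_ne_zero hreg φ))

section Crossings

variable (hp : ContDiff ℝ 3 p) (hreg : ∀ φ, 0 < (deriv p φ) ^ 2 + (deriv (deriv p) φ) ^ 2)
include hp hreg

theorem deriv_eq_zero_iff_cos_argLift_derivCurve (a t : ℝ) :
    deriv p t = 0 ↔ Real.cos (argLift (derivCurve p) a t) = 0 := by
  rw [← re_derivCurve]
  exact re_eq_zero_iff_cos_argLift (contDiff_derivCurve hp) (derivCurve_ne_zero hreg) a t

theorem im_deriv_div_derivCurve_neg {a t : ℝ} (ht : Real.cos (argLift (derivCurve p) a t) = 0) :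
    (deriv (derivCurve p) t / derivCurve p t).im < 0 := by
  rw [im_deriv_div_derivCurve_of_deriv_eq_zero hp hreg
    ((deriv_eq_zero_iff_cos_argLift_derivCurve hp hreg a t).mpr ht)]
  norm_num

theorem ncard_Ico_deriv_eq_zero {a b : ℝ} (hab : a ≤ b) {M : ℕ}
    (hM : argLift (derivCurve p) a a = argLift (derivCurve p) a b + M * π) :
    {φ ∈ Ico a b | deriv p φ = 0}.ncard = M := by
  simp only [deriv_eq_zero_iff_cos_argLift_derivCurve hp hreg a]
  rw [ncard_crossings_eq_ncard_levels (P := fun c => Real.cos c = 0)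
    (hasDerivAt_argLift (contDiff_derivCurve hp) (derivCurve_ne_zero hreg) a)
    (fun _ => im_deriv_div_derivCurve_neg hp hreg) hab, hM, ncard_Ioc_cos_eq_zero]

theorem argLift_derivCurve_lt {T : ℝ} (hper : Function.Periodic p T) (hT : 0 < T) :
    argLift (derivCurve p) 0 T < argLift (derivCurve p) 0 0 := by
  obtain ⟨t, ht, hpt⟩ := hper.exists_mem_Ico₀_deriv_eq_zero hT (hp.differentiable (by norm_num))
  have hθt := mem_Ioc_of_crossing (P := fun c => Real.cos c = 0)
    (hasDerivAt_argLift (contDiff_derivCurve hp) (derivCurve_ne_zero hreg) 0)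
    (fun _ => im_deriv_div_derivCurve_neg hp hreg) ht
    ((deriv_eq_zero_iff_cos_argLift_derivCurve hp hreg 0 t).mp hpt)
  exact hθt.1.trans_le hθt.2

end Crossings

end DerivCurve

theorem winding_number_evolute_equilibria
    (p : ℝ → ℝ) (hper : Function.Periodic p (2 * π)) (hp : ContDiff ℝ 3 p)
    (hreg : ∀ φ, 0 < (deriv p φ) ^ 2 + (deriv (deriv p) φ) ^ 2)
    (e : ℝ → ℝ × ℝ)
    (he : ∀ φ, e φ = deriv p φ • (-Real.sin φ, Real.cos φ)
        - deriv (deriv p) φ • (Real.cos φ, Real.sin φ))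
    (m : ℝ)
    (hm : m = (1 / (2 * π)) * ∫ φ in (0:ℝ)..(2 * π),
        ((e φ).1 * (deriv e φ).2 - (e φ).2 * (deriv e φ).1)
          / ((e φ).1 ^ 2 + (e φ).2 ^ 2))
    (n : ℕ)
    (hn : n = {φ ∈ Set.Ico (0:ℝ) (2 * π) | deriv p φ = 0}.ncard) :
    m = 1 - (n : ℝ) / 2 ∧ m ≤ 0 ∧ (n : ℝ) = 2 - 2 * m := by
  have hz : ContDiff ℝ 1 (derivCurve p) := contDiff_derivCurve hp
  have hz0 : ∀ t, derivCurve p t ≠ 0 := derivCurve_ne_zero hreg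
  obtain ⟨k, hk⟩ := exists_integral_im_deriv_div_eq_two_pi_mul_int hz hz0
    (by simpa using hper.derivCurve 0)
  have hmk : m = 1 + k := by
    rw [hm, intervalIntegral.integral_congr fun φ _ => evolute_winding_integrand hp hreg he φ,
      intervalIntegral.integral_add intervalIntegrable_const
        ((continuous_im_deriv_div hz hz0).intervalIntegrable _ _), hk,
      intervalIntegral.integral_const, smul_eq_mul, sub_zero]
    field_simp
  have hθk : argLift (derivCurve p) 0 (2 * π) = argLift (derivCurve p) 0 0 + 2 * π * k := by
    simp [argLift, hk]
  have hk_neg : k < 0 := by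
    have := argLift_derivCurve_lt hp hreg hper two_pi_pos
    exact_mod_cast (neg_of_mul_neg_right (by linarith) two_pi_pos.le : (k : ℝ) < 0)
  obtain ⟨M, hM⟩ : ∃ M : ℕ, (M : ℤ) = -2 * k := ⟨_, Int.toNat_of_nonneg (by omega)⟩
  have hMR : (M : ℝ) = -2 * k := by exact_mod_cast hM
  have hnM : n = M := hn ▸ ncard_Ico_deriv_eq_zero hp hreg two_pi_pos.le (by rw [hMR, hθk]; ring)
  have hk_le : (k : ℝ) ≤ -1 := by exact_mod_cast Int.le_sub_one_of_lt hk_neg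
  rw [hnM, hMR, hmk]
  exact ⟨by ring, by linarith, by ring⟩
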